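/- arXiv:1303.3980 — 2 statements merged into one kernel-verified Lean document; each statement's English description precedes it below -/
import Mathlib

section
/- Let k ≥ 1 and let a_j > 0, q_j < 1, η_j > 0, ζ_j > −1 be real numbers for j = 1,…,k. Let φ be the product of independent pathway densities, φ(x) = ∏_{j=1}^k c_j x_j^{ζ_j}[1 − a_j(1−q_j)x_j]^{η_j/(1−q_j)} for 0 < x_j < 1/(a_j(1−q_j)) (0 elsewhere), where c_j = [a_j(1−q_j)]^{ζ_j+1} Γ(ζ_j + η_j/(1−q_j) + 2)/(Γ(ζ_j+1) Γ(η_j/(1−q_j) + 1)). Let f : ℝ^k → [0,∞) be a measurable probability density vanishing outside (0,∞)^k. Then the pushforward of (volume.withDensity φ) ⊗ (volume.withDensity f) under the map (x, v) ↦ (x_1 v_1,…,x_k v_k) equals volume.withDensity g, where for u ∈ (0,∞)^k, g(u) = (∏_{j=1}^k c_j u_j^{ζ_j}) · ∫_{v_1 > a_1(1−q_1)u_1} ⋯ ∫_{v_k > a_k(1−q_k)u_k} (∏_{j=1}^k v_j^{−ζ_j − η_j/(1−q_j) − 1} [v_j − a_j(1−q_j)u_j]^{η_j/(1−q_j)})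 f(v_1,…,v_k) dv_1⋯dv_k. -/
open MeasureTheory Real Set
open scoped ENNReal

/-- Normalizing constant of the pathway density with parameters `a, q, η, ζ`:
`c = [a(1−q)]^{ζ+1} Γ(ζ + η/(1−q) + 2)/(Γ(ζ+1) Γ(η/(1−q) + 1))`. -/
noncomputable def pathwayC (a q η ζ : ℝ) : ℝ :=
  (a * (1 - q)) ^ (ζ + 1) * Real.Gamma (ζ + η / (1 - q) + 2) /
    (Real.Gamma (ζ + 1) * Real.Gamma (η / (1 - q) + 1))

/-! The law of `u = x v` (coordinatewise) is the multiplicative convolution of the laws of `x`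
and `v`. For fixed `v` with nonzero coordinates the substitution `u = v x` rescales Lebesgue
measure by `|∏ vᵢ|`, so by Tonelli that convolution has the Mellin-convolution density
`u ↦ ∫ Φ(u / v) F(v) dv / |∏ vᵢ|`. For the product pathway density `Φ`, the integrand splits
coordinatewise: `Φᵢ(uᵢ / vᵢ) / vᵢ = cᵢ uᵢ^ζᵢ vᵢ^(-ζᵢ-Eᵢ-1) (vᵢ - Aᵢuᵢ)^Eᵢ` for `vᵢ > Aᵢuᵢ`
and `0` otherwise. Both laws are finite measures, so the density is finite almost everywhere,
and wherever it is finite the lower integral may be replaced by a Bochner integral. -/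

section MellinConvolution

variable {ι : Type*} [Fintype ι]

theorem lintegral_comp_mul_left_pi {v : ι → ℝ} (hv : ∀ i, v i ≠ 0)
    {H : (ι → ℝ) → ℝ≥0∞} (hH : Measurable H) :
    ∫⁻ x, H (v * x) = ENNReal.ofReal |(∏ i, v i)⁻¹| * ∫⁻ u, H u := by
  classical
  have hdet : (Matrix.diagonal v).det ≠ 0 := by
    rw [Matrix.det_diagonal]; exact Finset.prod_ne_zero_iff.2 fun i _ => hv i
  have hmap := Real.map_matrix_volume_pi_eq_smul_volume_pi hdet
  rw [Matrix.det_diagonal] at hmap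
  have hlin : ∀ x, v * x = Matrix.toLin' (Matrix.diagonal v) x := fun x => by
    ext i; simp [Matrix.mulVec_diagonal]
  simp_rw [hlin]
  rw [← lintegral_map hH (LinearMap.continuous_on_pi _).measurable, hmap,
    lintegral_smul_measure, smul_eq_mul]

lemma lintegral_mul_comp_mul_right {y : ι → ℝ} (hy : ∀ i, y i ≠ 0) {Φ g : (ι → ℝ) → ℝ≥0∞}
    (hΦ : Measurable Φ) (hg : Measurable g) :
    ∫⁻ x, Φ x * g (x * y) = ENNReal.ofReal |(∏ i, y i)⁻¹| * ∫⁻ u, Φ (u / y) * g u := by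
  rw [← lintegral_comp_mul_left_pi hy (by fun_prop)]
  congr with x
  rw [mul_comm y x, show x * y / y = x from funext fun i => mul_div_cancel_right₀ (x i) (hy i)]

noncomputable def mellinConv (Φ F : (ι → ℝ) → ℝ≥0∞) (u : ι → ℝ) : ℝ≥0∞ :=
  ∫⁻ v, Φ (u / v) * ENNReal.ofReal |(∏ i, v i)⁻¹| * F v

lemma measurable_mellinConv {Φ F : (ι → ℝ) → ℝ≥0∞} (hΦ : Measurable Φ) (hF : Measurable F) :
    Measurable (mellinConv Φ F) :=
  Measurable.lintegral_prod_right'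
    (f := fun p : (ι → ℝ) × (ι → ℝ) => Φ (p.1 / p.2) * ENNReal.ofReal |(∏ i, p.2 i)⁻¹| * F p.2)
    (by fun_prop)

theorem withDensity_mconv_withDensity {Φ F : (ι → ℝ) → ℝ≥0∞} (hΦ : Measurable Φ)
    (hF : Measurable F) :
    volume.withDensity Φ ∗ₘ volume.withDensity F = volume.withDensity (mellinConv Φ F) := by
  ext s hs
  set g := s.indicator (1 : (ι → ℝ) → ℝ≥0∞)
  have hg : Measurable g := measurable_one.indicator hs
  have hy : ∀ᵐ y : ι → ℝ, ∀ i, y i ≠ 0 := ae_all_iff.2 fun i => Measure.ae_eval_ne _ i 0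
  rw [← lintegral_indicator_one hs, ← lintegral_indicator_one hs, Measure.lintegral_mconv hg,
    lintegral_withDensity_eq_lintegral_mul _ hΦ (by fun_prop),
    lintegral_withDensity_eq_lintegral_mul _ (measurable_mellinConv hΦ hF) hg]
  calc ∫⁻ x, Φ x * ∫⁻ y, g (x * y) ∂volume.withDensity F
      = ∫⁻ x, ∫⁻ y, Φ x * (F y * g (x * y)) := by
        refine lintegral_congr fun x => ?_
        rw [lintegral_withDensity_eq_lintegral_mul _ hF (by fun_prop),
          ← lintegral_const_mul _ (by fun_prop)]
        rfl
    _ = ∫⁻ y, F y * ∫⁻ x, Φ x * g (x * y) := by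
        rw [lintegral_lintegral_swap (by fun_prop)]
        refine lintegral_congr fun y => ?_
        rw [← lintegral_const_mul _ (by fun_prop)]
        exact lintegral_congr fun x => by ring
    _ = ∫⁻ y, ∫⁻ u, Φ (u / y) * ENNReal.ofReal |(∏ i, y i)⁻¹| * F y * g u := by
        refine lintegral_congr_ae (hy.mono fun y hy => ?_)
        dsimp only
        rw [lintegral_mul_comp_mul_right hy hΦ hg, ← lintegral_const_mul _ (by fun_prop),
          ← lintegral_const_mul _ (by fun_prop)]
        exact lintegral_congr fun u => by ring
    _ = ∫⁻ u, mellinConv Φ F u * g u := by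
        rw [lintegral_lintegral_swap (by fun_prop)]
        exact lintegral_congr fun u => lintegral_mul_const _ (by fun_prop)

lemma ae_mellinConv_lt_top {Φ F : (ι → ℝ) → ℝ≥0∞} (hΦ : Measurable Φ) (hF : Measurable F)
    (hΦ_fin : ∫⁻ x, Φ x ≠ ∞) (hF_fin : ∫⁻ v, F v ≠ ∞) :
    ∀ᵐ u, mellinConv Φ F u < ∞ := by
  have := isFiniteMeasure_withDensity hΦ_fin
  have := isFiniteMeasure_withDensity hF_fin
  have hfin : IsFiniteMeasure (volume.withDensity (mellinConv Φ F)) :=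
    withDensity_mconv_withDensity hΦ hF ▸ inferInstance
  refine ae_lt_top (measurable_mellinConv hΦ hF) ?_
  simpa using measure_ne_top (volume.withDensity (mellinConv Φ F)) univ

end MellinConvolution

section Pathway

lemma pathwayC_pos {a q η ζ : ℝ} (ha : 0 < a) (hq : q < 1) (hη : 0 ≤ η) (hζ : -1 < ζ) :
    0 < pathwayC a q η ζ := by
  have h1q : 0 < 1 - q := sub_pos.2 hq
  have hE : 0 ≤ η / (1 - q) := div_nonneg hη h1q.le
  unfold pathwayC
  have := Real.Gamma_pos_of_pos (show 0 < ζ + η / (1 - q) + 2 by linarith)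
  have := Real.Gamma_pos_of_pos (show 0 < ζ + 1 by linarith)
  have := Real.Gamma_pos_of_pos (show 0 < η / (1 - q) + 1 by linarith)
  have := rpow_pos_of_pos (mul_pos ha h1q) (ζ + 1)
  positivity

/-- The one-dimensional pathway density, with `A = a(1-q)` and `E = η/(1-q)`. -/
noncomputable def pathwayDensity (c A ζ E : ℝ) : ℝ → ℝ :=
  (Ioo 0 (1 / A)).indicator fun t => c * (t ^ ζ * (1 - A * t) ^ E)

variable {c A ζ E : ℝ}

@[fun_prop]
lemma measurable_pathwayDensity : Measurable (pathwayDensity c A ζ E) :=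
  Measurable.indicator (by fun_prop) measurableSet_Ioo

lemma pathwayDensity_nonneg (hA : 0 < A) (hc : 0 ≤ c) (t : ℝ) : 0 ≤ pathwayDensity c A ζ E t := by
  refine indicator_nonneg (fun t ht => ?_) t
  have hAt : A * t < 1 := by have := ht.2; rwa [lt_div_iff₀ hA, mul_comm] at this
  exact mul_nonneg hc (mul_nonneg (rpow_nonneg ht.1.le _) (rpow_nonneg (by linarith) _))

lemma integrable_pathwayDensity (hζ : -1 < ζ) (hE : 0 ≤ E) :
    Integrable (pathwayDensity c A ζ E) := by
  have hcont : Continuous fun t : ℝ => (1 - A * t) ^ E :=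
    (by fun_prop : Continuous fun t : ℝ => 1 - A * t).rpow_const fun _ => Or.inr hE
  have hint : IntervalIntegrable (fun t => c * (t ^ ζ * (1 - A * t) ^ E)) volume 0 (1 / A) :=
    ((intervalIntegral.intervalIntegrable_rpow' hζ).mul_continuousOn hcont.continuousOn).const_mul c
  rw [pathwayDensity, integrable_indicator_iff measurableSet_Ioo]
  exact (intervalIntegrable_iff.1 hint).mono_set (Ioo_subset_Ioc_self.trans Ioc_subset_uIoc)

lemma pathwayDensity_div_mul_inv (hA : 0 < A) {u v : ℝ} (hu : 0 < u) (hv : 0 < v) :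
    pathwayDensity c A ζ E (u / v) * v⁻¹
      = c * u ^ ζ * (Ioi (A * u)).indicator (fun v => v ^ (-ζ - E - 1) * (v - A * u) ^ E) v := by
  have hmem : u / v ∈ Ioo 0 (1 / A) ↔ v ∈ Ioi (A * u) := by
    rw [mem_Ioo, mem_Ioi, div_lt_div_iff₀ hv hA, one_mul, mul_comm u A]
    exact and_iff_right (div_pos hu hv)
  by_cases h : v ∈ Ioi (A * u)
  · rw [pathwayDensity, indicator_of_mem (hmem.2 h), indicator_of_mem h]
    have hvAu : 0 ≤ v - A * u := sub_nonneg.2 (le_of_lt h)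
    have hsub : 1 - A * (u / v) = (v - A * u) / v := by field_simp
    have hpow : v ^ (-ζ - E - 1) = (v ^ ζ)⁻¹ * ((v ^ E)⁻¹ * v⁻¹) := by
      rw [show -ζ - E - 1 = -ζ + (-E + -1) by ring, rpow_add hv, rpow_add hv,
        rpow_neg hv.le, rpow_neg hv.le, rpow_neg_one]
    rw [div_rpow hu.le hv.le, hsub, div_rpow hvAu hv.le, hpow, div_eq_mul_inv, div_eq_mul_inv]
    ring
  · rw [pathwayDensity, indicator_of_notMem (mt hmem.1 h), indicator_of_notMem h]
    ring

lemma pathwayDensity_of_nonpos {t : ℝ} (ht : t ≤ 0) : pathwayDensity c A ζ E t = 0 :=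
  indicator_of_notMem (fun h => ht.not_gt h.1) _

end Pathway

section PathwayProduct

variable {ι : Type*} [Fintype ι] {c A ζ E : ι → ℝ}

lemma Set.indicator_univ_pi_prod {κ R : Type*} [CommMonoidWithZero R] (s : ι → Set κ)
    (g : ι → κ → R) (x : ι → κ) :
    (univ.pi s).indicator (fun x => ∏ i, g i (x i)) x = ∏ i, (s i).indicator (g i) (x i) := by
  by_cases hx : x ∈ univ.pi s
  · rw [indicator_of_mem hx]
    exact Finset.prod_congr rfl fun i _ => (indicator_of_mem (hx i (mem_univ i)) _).symm
  · obtain ⟨i, hi⟩ : ∃ i, x i ∉ s i := by simpa using hx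
    rw [indicator_of_notMem hx, Finset.prod_eq_zero (Finset.mem_univ i) (indicator_of_notMem hi _)]

noncomputable def pathwayProdDensity (c A ζ E : ι → ℝ) (x : ι → ℝ) : ℝ≥0∞ :=
  ENNReal.ofReal (∏ i, pathwayDensity (c i) (A i) (ζ i) (E i) (x i))

@[fun_prop]
lemma measurable_pathwayProdDensity : Measurable (pathwayProdDensity c A ζ E) := by
  unfold pathwayProdDensity; fun_prop

lemma lintegral_pathwayProdDensity_ne_top (hζ : ∀ i, -1 < ζ i) (hE : ∀ i, 0 ≤ E i) :
    ∫⁻ x, pathwayProdDensity c A ζ E x ≠ ∞ :=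
  (Integrable.fintype_prod fun i => integrable_pathwayDensity (hζ i) (hE i)).lintegral_lt_top.ne

lemma prod_pathwayDensity_div_mul_inv (hA : ∀ i, 0 < A i) {u v : ι → ℝ} (hu : ∀ i, 0 < u i)
    (hv : ∀ i, 0 < v i) :
    (∏ i, pathwayDensity (c i) (A i) (ζ i) (E i) (u i / v i)) * |(∏ i, v i)⁻¹|
      = (∏ i, c i * u i ^ ζ i) * {v | ∀ i, A i * u i < v i}.indicator
          (fun v => ∏ i, v i ^ (-ζ i - E i - 1) * (v i - A i * u i) ^ E i) v := by
  have hT : {v : ι → ℝ | ∀ i, A i * u i < v i} = univ.pi fun i => Ioi (A i * u i) := by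
    ext; simp
  rw [abs_of_pos (inv_pos.2 (Finset.prod_pos fun i _ => hv i)), ← Finset.prod_inv_distrib,
    ← Finset.prod_mul_distrib, hT,
    Set.indicator_univ_pi_prod (g := fun i t => t ^ (-ζ i - E i - 1) * (t - A i * u i) ^ E i),
    ← Finset.prod_mul_distrib]
  exact Finset.prod_congr rfl fun i _ => pathwayDensity_div_mul_inv (hA i) (hu i) (hv i)

lemma ofReal_pathway_mellin_integrand (hA : ∀ i, 0 < A i) (hc : ∀ i, 0 ≤ c i)
    {f : (ι → ℝ) → ℝ} (hf_supp : ∀ x, ¬ (∀ i, 0 < x i) → f x = 0) {u : ι → ℝ}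
    (hu : ∀ i, 0 < u i) (v : ι → ℝ) :
    pathwayProdDensity c A ζ E (u / v) * ENNReal.ofReal |(∏ i, v i)⁻¹| * ENNReal.ofReal (f v)
      = ENNReal.ofReal (∏ i, c i * u i ^ ζ i) * ENNReal.ofReal
          ({v | ∀ i, A i * u i < v i}.indicator
            (fun v => (∏ i, v i ^ (-ζ i - E i - 1) * (v i - A i * u i) ^ E i) * f v) v) := by
  by_cases hv : ∀ i, 0 < v i
  · have hΦ : 0 ≤ ∏ i, pathwayDensity (c i) (A i) (ζ i) (E i) ((u / v) i) :=
      Finset.prod_nonneg fun i _ => pathwayDensity_nonneg (hA i) (hc i) _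
    have hC : 0 ≤ ∏ i, c i * u i ^ ζ i :=
      Finset.prod_nonneg fun i _ => mul_nonneg (hc i) (rpow_nonneg (hu i).le _)
    rw [pathwayProdDensity, ← ENNReal.ofReal_mul hΦ,
      ← ENNReal.ofReal_mul (mul_nonneg hΦ (abs_nonneg _)), ← ENNReal.ofReal_mul hC, indicator_mul_left, ← mul_assoc]
    exact congrArg (fun r => ENNReal.ofReal (r * f v)) (prod_pathwayDensity_div_mul_inv hA hu hv)
  · simp [indicator_apply, hf_supp v hv]

lemma mellinConv_pathway_of_pos (hA : ∀ i, 0 < A i) (hc : ∀ i, 0 ≤ c i)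
    {f : (ι → ℝ) → ℝ} (hf_supp : ∀ x, ¬ (∀ i, 0 < x i) → f x = 0) {u : ι → ℝ}
    (hu : ∀ i, 0 < u i) :
    mellinConv (pathwayProdDensity c A ζ E)
        (fun v => ENNReal.ofReal (f v)) u
      = ENNReal.ofReal (∏ i, c i * u i ^ ζ i) * ∫⁻ v in {v | ∀ i, A i * u i < v i},
          ENNReal.ofReal ((∏ i, v i ^ (-ζ i - E i - 1) * (v i - A i * u i) ^ E i) * f v) := by
  rw [mellinConv, ← lintegral_indicator (by measurability),
    ← lintegral_const_mul' _ _ ENNReal.ofReal_ne_top]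
  refine lintegral_congr fun v => ?_
  rw [ofReal_pathway_mellin_integrand hA hc hf_supp hu v]
  exact congrArg _ (congrFun (indicator_comp_of_zero ENNReal.ofReal_zero).symm v)

lemma mellinConv_pathway_eq_ofReal (hc : ∀ i, 0 < c i) (hA : ∀ i, 0 < A i)
    {f : (ι → ℝ) → ℝ} (hf_meas : Measurable f) (hf_nonneg : ∀ x, 0 ≤ f x)
    (hf_supp : ∀ x, ¬ (∀ i, 0 < x i) → f x = 0) {u : ι → ℝ} (hu : ∀ i, 0 < u i)
    (hfin : mellinConv (pathwayProdDensity c A ζ E) (fun v => ENNReal.ofReal (f v)) u < ∞) :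
    mellinConv (pathwayProdDensity c A ζ E)
        (fun v => ENNReal.ofReal (f v)) u
      = ENNReal.ofReal ((∏ i, c i * u i ^ ζ i) * ∫ v in {v | ∀ i, A i * u i < v i},
          (∏ i, v i ^ (-ζ i - E i - 1) * (v i - A i * u i) ^ E i) * f v) := by
  have hC : 0 < ∏ i, c i * u i ^ ζ i :=
    Finset.prod_pos fun i _ => mul_pos (hc i) (rpow_pos_of_pos (hu i) _)
  have hT : MeasurableSet {v : ι → ℝ | ∀ i, A i * u i < v i} := by measurability
  have hnonneg : ∀ᵐ v ∂volume.restrict {v : ι → ℝ | ∀ i, A i * u i < v i},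
      0 ≤ (∏ i, v i ^ (-ζ i - E i - 1) * (v i - A i * u i) ^ E i) * f v := by
    refine (ae_restrict_iff' hT).2 (Filter.Eventually.of_forall fun v hv => ?_)
    refine mul_nonneg (Finset.prod_nonneg fun i _ => mul_nonneg ?_ ?_) (hf_nonneg v)
    · exact rpow_nonneg ((mul_pos (hA i) (hu i)).trans (hv i)).le _
    · exact rpow_nonneg (sub_nonneg.2 (hv i).le) _
  rw [mellinConv_pathway_of_pos hA (fun i => (hc i).le) hf_supp hu] at hfin ⊢
  have hT_fin := ENNReal.lt_top_of_mul_ne_top_right hfin.ne (ENNReal.ofReal_pos.2 hC).ne'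
  rw [ENNReal.ofReal_mul hC.le, integral_eq_lintegral_of_nonneg_ae hnonneg (by fun_prop),
    ENNReal.ofReal_toReal hT_fin.ne]

lemma mellinConv_pathway_of_not_pos {f : (ι → ℝ) → ℝ}
    (hf_supp : ∀ x, ¬ (∀ i, 0 < x i) → f x = 0) {u : ι → ℝ} (hu : ¬ ∀ i, 0 < u i) :
    mellinConv (pathwayProdDensity c A ζ E)
        (fun v => ENNReal.ofReal (f v)) u = 0 := by
  refine (lintegral_congr fun v => ?_).trans lintegral_zero
  by_cases hv : ∀ i, 0 < v i
  · obtain ⟨i, hi⟩ := not_forall.1 hu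
    have hdiv : u i / v i ≤ 0 := div_nonpos_of_nonpos_of_nonneg (not_lt.1 hi) (hv i).le
    have hΦ : ∏ j, pathwayDensity (c j) (A j) (ζ j) (E j) (u j / v j) = 0 :=
      Finset.prod_eq_zero (Finset.mem_univ i) (pathwayDensity_of_nonpos hdiv)
    simp [pathwayProdDensity, hΦ]
  · simp [hf_supp v hv]

theorem map_mul_prod_withDensity_pathway (hc : ∀ i, 0 < c i) (hA : ∀ i, 0 < A i)
    (hζ : ∀ i, -1 < ζ i) (hE : ∀ i, 0 ≤ E i) (f : (ι → ℝ) → ℝ) (hf_meas : Measurable f)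
    (hf_nonneg : ∀ x, 0 ≤ f x) (hf_supp : ∀ x, ¬ (∀ i, 0 < x i) → f x = 0)
    (hf_int : ∫⁻ x, ENNReal.ofReal (f x) ≠ ∞) :
    Measure.map (fun p : (ι → ℝ) × (ι → ℝ) => fun i => p.1 i * p.2 i)
      ((volume.withDensity (fun x => ENNReal.ofReal
          (Set.indicator {x : ι → ℝ | ∀ i, 0 < x i ∧ x i < 1 / A i}
            (fun x => ∏ i, c i * (x i ^ ζ i * (1 - A i * x i) ^ E i)) x))).prod
        (volume.withDensity fun v => ENNReal.ofReal (f v)))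
    = volume.withDensity fun u => ENNReal.ofReal
        (Set.indicator {u : ι → ℝ | ∀ i, 0 < u i}
          (fun u => (∏ i, c i * u i ^ ζ i) *
            ∫ v in {v : ι → ℝ | ∀ i, A i * u i < v i},
              (∏ i, v i ^ (-ζ i - E i - 1) * (v i - A i * u i) ^ E i) * f v) u) := by
  have hS : {x : ι → ℝ | ∀ i, 0 < x i ∧ x i < 1 / A i} = univ.pi fun i => Ioo 0 (1 / A i) := by
    ext; simp
  simp_rw [hS, Set.indicator_univ_pi_prod
    (g := fun i t => c i * (t ^ ζ i * (1 - A i * t) ^ E i))]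
  change volume.withDensity (pathwayProdDensity c A ζ E) ∗ₘ _ = _
  rw [withDensity_mconv_withDensity measurable_pathwayProdDensity (by fun_prop)]
  have hfin := ae_mellinConv_lt_top measurable_pathwayProdDensity hf_meas.ennreal_ofReal
    (lintegral_pathwayProdDensity_ne_top (c := c) (A := A) hζ hE) hf_int
  refine withDensity_congr_ae (hfin.mono fun u hu => ?_)
  beta_reduce
  by_cases hu0 : u ∈ {u : ι → ℝ | ∀ i, 0 < u i}
  · rw [indicator_of_mem hu0, mellinConv_pathway_eq_ofReal hc hA hf_meas hf_nonneg hf_supp hu0 hu]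
  · rw [indicator_of_notMem hu0, ENNReal.ofReal_zero, mellinConv_pathway_of_not_pos hf_supp hu0]

end PathwayProduct

theorem pathway_kober2_density_general {k : ℕ} (a q η ζ : Fin k → ℝ)
    (ha : ∀ j, 0 < a j) (hq : ∀ j, q j < 1) (hη : ∀ j, 0 < η j) (hζ : ∀ j, -1 < ζ j)
    (f : (Fin k → ℝ) → ℝ) (hf_meas : Measurable f) (hf_nonneg : ∀ x, 0 ≤ f x)
    (hf_supp : ∀ x, ¬ (∀ j, 0 < x j) → f x = 0)
    (hf_int : ∫⁻ x, ENNReal.ofReal (f x) = 1) :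
    Measure.map (fun p : (Fin k → ℝ) × (Fin k → ℝ) => fun j => p.1 j * p.2 j)
      ((volume.withDensity (fun x => ENNReal.ofReal
          (Set.indicator
            {x : Fin k → ℝ | ∀ j, 0 < x j ∧ x j < 1 / (a j * (1 - q j))}
            (fun x => ∏ j, pathwayC (a j) (q j) (η j) (ζ j) *
              (x j ^ ζ j *
                (1 - a j * (1 - q j) * x j) ^ (η j / (1 - q j)))) x))).prod
        (volume.withDensity fun v => ENNReal.ofReal (f v)))
    = volume.withDensity fun u => ENNReal.ofReal
        (Set.indicator {u : Fin k → ℝ | ∀ j, 0 < u j}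
          (fun u => (∏ j, pathwayC (a j) (q j) (η j) (ζ j) * u j ^ ζ j) *
            ∫ v in {v : Fin k → ℝ | ∀ j, a j * (1 - q j) * u j < v j},
              (∏ j, v j ^ (-ζ j - η j / (1 - q j) - 1) *
                (v j - a j * (1 - q j) * u j) ^ (η j / (1 - q j))) * f v) u) := by
  have h1q : ∀ j, 0 < 1 - q j := fun j => sub_pos.2 (hq j)
  exact map_mul_prod_withDensity_pathway
    (fun j => pathwayC_pos (ha j) (hq j) (hη j).le (hζ j)) (fun j => mul_pos (ha j) (h1q j)) hζ
    (fun j => div_nonneg (hη j).le (h1q j).le) f hf_meas hf_nonneg hf_supp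
    (hf_int ▸ ENNReal.one_ne_top)

/-- Theorem 1.4: if `x_1,…,x_k` are independent pathway distributed variables with
parameters `a_j, q_j, η_j, ζ_j`, and `(v_1,…,v_k)` has an arbitrary joint density `f`
on the positive orthant, independent of the `x_j`, then the joint density of
`u_j = x_j v_j` is given by (1.15), i.e. the pathway-extended multivariable Kober
representation of the second kind. -/
theorem pathway_kober2_density {k : ℕ} (hk : 1 ≤ k) (a q η ζ : Fin k → ℝ)
    (ha : ∀ j, 0 < a j) (hq : ∀ j, q j < 1) (hη : ∀ j, 0 < η j) (hζ : ∀ j, -1 < ζ j)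
    (f : (Fin k → ℝ) → ℝ) (hf_meas : Measurable f) (hf_nonneg : ∀ x, 0 ≤ f x)
    (hf_supp : ∀ x, ¬ (∀ j, 0 < x j) → f x = 0)
    (hf_int : ∫⁻ x, ENNReal.ofReal (f x) = 1) :
    Measure.map (fun p : (Fin k → ℝ) × (Fin k → ℝ) => fun j => p.1 j * p.2 j)
      ((volume.withDensity (fun x => ENNReal.ofReal
          (Set.indicator
            {x : Fin k → ℝ | ∀ j, 0 < x j ∧ x j < 1 / (a j * (1 - q j))}
            (fun x => ∏ j, pathwayC (a j) (q j) (η j) (ζ j) *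
              (x j ^ ζ j *
                (1 - a j * (1 - q j) * x j) ^ (η j / (1 - q j)))) x))).prod
        (volume.withDensity fun v => ENNReal.ofReal (f v)))
    = volume.withDensity fun u => ENNReal.ofReal
        (Set.indicator {u : Fin k → ℝ | ∀ j, 0 < u j}
          (fun u => (∏ j, pathwayC (a j) (q j) (η j) (ζ j) * u j ^ ζ j) *
            ∫ v in {v : Fin k → ℝ | ∀ j, a j * (1 - q j) * u j < v j},
              (∏ j, v j ^ (-ζ j - η j / (1 - q j) - 1) *
                (v j - a j * (1 - q j) * u j) ^ (η j / (1 - q j))) * f v) u) :=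
  pathway_kober2_density_general a q η ζ ha hq hη hζ f hf_meas hf_nonneg hf_supp hf_int
end

section
/- Let k ≥ 1 and let ζ_j > 0, α_j > 0 be real numbers for j = 1,…,k. Let φ be the product of independent type-1 beta densities with parameters (ζ_j, α_j), i.e. φ(x) = ∏_{j=1}^k [Γ(ζ_j+α_j)/(Γ(ζ_j)Γ(α_j))] x_j^{ζ_j−1}(1−x_j)^{α_j−1} for x ∈ (0,1)^k and 0 otherwise, and let f : ℝ^k → [0,∞) be a measurable probability density vanishing outside (0,∞)^k. Then the pushforward of (volume.withDensity φ) ⊗ (volume.withDensity f) on ℝ^k × ℝ^k under the map (x, v) ↦ (v_1/x_1, …, v_k/x_k) equals volume.withDensity g, where g satisfies ∏_{j=1}^k [Γ(ζ_j)/Γ(ζ_j+α_j)] · g(u) = (I^{(ζ,α)} f)(u) for almost every u ∈ (0,∞)^k, with I^{(ζ,α)} the multivariable Kober fractional integral operator of the first kind. -/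
open MeasureTheory Real Set
open scoped ENNReal

/-- The multivariable Kober fractional integral operator of the first kind with
parameters `(ζ j, α j)`, `j = 1,…,k`. -/
noncomputable def kober1 {k : ℕ} (ζ α : Fin k → ℝ) (f : (Fin k → ℝ) → ℝ)
    (u : Fin k → ℝ) : ℝ :=
  (∏ j, u j ^ (-ζ j - α j) / Real.Gamma (α j)) *
    ∫ v in {v : Fin k → ℝ | ∀ j, 0 < v j ∧ v j < u j},
      (∏ j, (u j - v j) ^ (α j - 1) * v j ^ ζ j) * f v

/-!
If `x` and `v` are independent with densities `φ` and `f`, the coordinatewise quotient `v / x`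
has density `G u = ∫ φ x f (x u) |∏ x_j| dx`: slice the product measure at `x`, substitute
`v = x u` in the inner integral and exchange the two integrals by Tonelli. For `φ` a product of
type-1 beta densities and `u` in the positive orthant, the substitution `x = v / u` turns `G u`
into `∏ Γ(ζ_j + α_j) / Γ(ζ_j)` times the Kober integral `I^{(ζ,α)} f (u)`; the domain
`0 < v_j < u_j` is where the beta kernel at `v_j / u_j` is nonzero. Since `G` has total mass
`1`, it is finite almost everywhere and `g = G.toReal` is the required density.
-/

open ProbabilityTheory

section QuotientDensity

variable {ι : Type*} [Fintype ι]

theorem map_volume_pi_mul_left {c : ι → ℝ} (hc : ∀ j, c j ≠ 0) :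
    Measure.map (c * ·) (volume : Measure (ι → ℝ)) = ENNReal.ofReal |∏ j, c j|⁻¹ • volume := by
  classical
  have hdet : LinearMap.det (Matrix.toLin' (Matrix.diagonal c)) = ∏ j, c j := by
    rw [LinearMap.det_toLin', Matrix.det_diagonal]
  have hmap := Real.map_linearMap_volume_pi_eq_smul_volume_pi
    (hdet ▸ Finset.prod_ne_zero_iff.2 fun j _ => hc j)
  rw [hdet, abs_inv] at hmap
  convert hmap using 2
  ext v j
  simp [Matrix.mulVec_diagonal]

theorem lintegral_eq_abs_prod_mul_lintegral_comp_mul_left {c : ι → ℝ} (hc : ∀ j, c j ≠ 0)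
    (h : (ι → ℝ) → ℝ≥0∞) :
    ∫⁻ v, h v = ENNReal.ofReal |∏ j, c j| * ∫⁻ v, h (c * v) := by
  let e := (Homeomorph.piCongrRight fun j => Homeomorph.mulLeft₀ (c j) (hc j)).toMeasurableEquiv
  have hprod : |∏ j, c j| ≠ 0 := abs_ne_zero.2 (Finset.prod_ne_zero_iff.2 fun j _ => hc j)
  calc ∫⁻ v, h v
      = ∫⁻ v, h v ∂(ENNReal.ofReal |∏ j, c j| • Measure.map e volume) := by
        rw [show ⇑e = (c * ·) from rfl, map_volume_pi_mul_left hc, smul_smul,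
          ← ENNReal.ofReal_mul (abs_nonneg _), mul_inv_cancel₀ hprod,
          ENNReal.ofReal_one, one_smul]
    _ = ENNReal.ofReal |∏ j, c j| * ∫⁻ v, h (c * v) := by
        rw [lintegral_smul_measure, lintegral_map_equiv, smul_eq_mul]
        rfl

noncomputable def quotientDensity (φ f : (ι → ℝ) → ℝ≥0∞) (u : ι → ℝ) : ℝ≥0∞ :=
  ∫⁻ x, φ x * f (x * u) * ENNReal.ofReal |∏ j, x j|

variable {φ f : (ι → ℝ) → ℝ≥0∞}

theorem measurable_quotientDensity (hφ : Measurable φ) (hf : Measurable f) :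
    Measurable (quotientDensity φ f) :=
  Measurable.lintegral_prod_right (by fun_prop)

theorem withDensity_preimage_div {x : ι → ℝ} (hx : ∀ j, x j ≠ 0)
    {s : Set (ι → ℝ)} (hs : MeasurableSet s) :
    volume.withDensity f ((· / x) ⁻¹' s) = ENNReal.ofReal |∏ j, x j| * ∫⁻ u in s, f (x * u) := by
  have hcancel : ∀ u : ι → ℝ, x * u / x = u :=
    fun u => funext fun j => mul_div_cancel_left₀ (u j) (hx j)
  have hpre : MeasurableSet ((· / x) ⁻¹' s) := (by fun_prop : Measurable (· / x)) hs
  rw [withDensity_apply _ hpre, ← lintegral_indicator hpre,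
    lintegral_eq_abs_prod_mul_lintegral_comp_mul_left hx, ← lintegral_indicator hs]
  congr 2
  ext u
  classical
  simp only [indicator_apply, mem_preimage, hcancel]

theorem map_div_prod_withDensity (hφ : Measurable φ) (hf : Measurable f) :
    Measure.map (fun p : (ι → ℝ) × (ι → ℝ) => p.2 / p.1)
        ((volume.withDensity φ).prod (volume.withDensity f))
      = volume.withDensity (quotientDensity φ f) := by
  have hT : Measurable fun p : (ι → ℝ) × (ι → ℝ) => p.2 / p.1 := by fun_prop
  -- off the null coordinate hyperplanes, `v ↦ v / x` is an invertible scaling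
  have hx0 : ∀ᵐ x : ι → ℝ, ∀ j, x j ≠ 0 := ae_all_iff.2 fun j => Measure.ae_eval_ne _ j 0
  ext s hs
  rw [Measure.map_apply hT hs, Measure.prod_apply (hT hs),
    lintegral_withDensity_eq_lintegral_mul _ hφ (measurable_measure_prodMk_left (hT hs)),
    withDensity_apply _ hs]
  calc ∫⁻ x, (φ * fun x => volume.withDensity f (Prod.mk x ⁻¹' ((fun p => p.2 / p.1) ⁻¹' s))) x
      = ∫⁻ x, ∫⁻ u in s, φ x * f (x * u) * ENNReal.ofReal |∏ j, x j| := by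
        refine lintegral_congr_ae (hx0.mono fun x hx => ?_)
        change φ x * volume.withDensity f ((· / x) ⁻¹' s) = _
        rw [withDensity_preimage_div hx hs, ← lintegral_const_mul' _ _ ENNReal.ofReal_ne_top,
          ← lintegral_const_mul _ (by fun_prop)]
        simp only [mul_comm, mul_left_comm]
    _ = ∫⁻ u in s, quotientDensity φ f u :=
        lintegral_lintegral_swap (by fun_prop)

theorem lintegral_quotientDensity (hφ : Measurable φ) (hf : Measurable f) :
    ∫⁻ u, quotientDensity φ f u = (∫⁻ x, φ x) * ∫⁻ v, f v := by
  have h := congrArg (fun μ : Measure (ι → ℝ) => μ univ) (map_div_prod_withDensity hφ hf)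
  simp only [Measure.map_apply (by fun_prop : Measurable fun p : (ι → ℝ) × (ι → ℝ) => p.2 / p.1)
    MeasurableSet.univ, preimage_univ, ← univ_prod_univ, Measure.prod_prod,
    withDensity_apply _ MeasurableSet.univ, Measure.restrict_univ] at h
  exact h.symm

end QuotientDensity

section BetaPDF

theorem betaPDFReal_eq_indicator (a b : ℝ) :
    betaPDFReal a b = (Ioo 0 1).indicator fun t =>
      Gamma (a + b) / (Gamma a * Gamma b) * (t ^ (a - 1) * (1 - t) ^ (b - 1)) := by
  ext t
  rw [betaPDFReal, indicator_apply, beta, one_div_div, mul_assoc]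
  rfl

variable {a b : ℝ}

theorem betaPDFReal_nonneg (ha : 0 < a) (hb : 0 < b) (t : ℝ) : 0 ≤ betaPDFReal a b t := by
  rw [betaPDFReal]
  split_ifs with ht
  · exact (mul_pos (mul_pos (one_div_pos.2 (beta_pos ha hb)) (rpow_pos_of_pos ht.1 _))
      (rpow_pos_of_pos (sub_pos.2 ht.2) _)).le
  · exact le_rfl

theorem integrable_betaPDFReal (ha : 0 < a) (hb : 0 < b) : Integrable (betaPDFReal a b) :=
  (lintegral_ofReal_ne_top_iff_integrable (by fun_prop)
    (ae_of_all _ (betaPDFReal_nonneg ha hb))).1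
    (ne_of_eq_of_ne (lintegral_betaPDF_eq_one ha hb) ENNReal.one_ne_top)

theorem integral_betaPDFReal (ha : 0 < a) (hb : 0 < b) : ∫ t, betaPDFReal a b t = 1 := by
  rw [integral_eq_lintegral_of_nonneg_ae (ae_of_all _ (betaPDFReal_nonneg ha hb)) (by fun_prop)]
  change (∫⁻ t, betaPDF a b t).toReal = 1
  rw [lintegral_betaPDF_eq_one ha hb, ENNReal.toReal_one]

theorem inv_mul_betaPDFReal_inv_mul {u : ℝ} (hu : 0 < u) (v : ℝ) :
    u⁻¹ * betaPDFReal a b (u⁻¹ * v) * |u⁻¹ * v|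
      = (Ioo 0 u).indicator (fun v => u ^ (-a - b) / beta a b * ((u - v) ^ (b - 1) * v ^ a)) v := by
  by_cases hv : v ∈ Ioo 0 u
  · have hvu : 0 < u - v := sub_pos.2 hv.2
    have hva : v ^ a = v ^ (a - 1) * v := by rw [← rpow_add_one hv.1.ne']; ring_nf
    have hub : u ^ (-a - b) = (u ^ (a - 1) * u ^ (b - 1) * u * u)⁻¹ := by
      rw [← rpow_add hu, ← rpow_add_one hu.ne', ← rpow_add_one hu.ne', ← rpow_neg hu.le]
      ring_nf
    have hw : u⁻¹ * v ∈ Ioo 0 1 := by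
      rw [← div_eq_inv_mul]
      exact ⟨div_pos hv.1 hu, (div_lt_one hu).2 hv.2⟩
    rw [betaPDFReal_eq_indicator, indicator_of_mem hw, indicator_of_mem hv, abs_of_pos hw.1]
    simp only [← div_eq_inv_mul]
    rw [one_sub_div hu.ne', div_rpow hv.1.le hu.le, div_rpow hvu.le hu.le, hva, hub, beta]
    field_simp
  · have hw : u⁻¹ * v ∉ Ioo 0 1 := by
      rwa [← div_eq_inv_mul, mem_Ioo, div_pos_iff_of_pos_right hu, div_lt_one hu]
    rw [betaPDFReal_eq_indicator, indicator_of_notMem hw, indicator_of_notMem hv, mul_zero,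
      zero_mul]

end BetaPDF

section ProductBeta

variable {ι : Type*} [Fintype ι]

theorem prod_indicator_apply_eq_indicator_univ_pi {M : Type*} [CommMonoidWithZero M]
    (s : ι → Set ℝ) (g : ι → ℝ → M) (x : ι → ℝ) :
    ∏ j, (s j).indicator (g j) (x j) = (univ.pi s).indicator (fun x => ∏ j, g j (x j)) x := by
  by_cases hx : x ∈ univ.pi s
  · rw [indicator_of_mem hx]
    exact Finset.prod_congr rfl fun j _ => indicator_of_mem (hx j (mem_univ j)) _
  · obtain ⟨j, hj⟩ := by simpa [mem_pi] using hx
    rw [indicator_of_notMem hx]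
    exact Finset.prod_eq_zero (Finset.mem_univ j) (indicator_of_notMem hj _)

theorem indicator_eq_prod_betaPDFReal (a b : ι → ℝ) (x : ι → ℝ) :
    {x : ι → ℝ | ∀ j, 0 < x j ∧ x j < 1}.indicator (fun x => ∏ j,
        Gamma (a j + b j) / (Gamma (a j) * Gamma (b j)) *
          (x j ^ (a j - 1) * (1 - x j) ^ (b j - 1))) x
      = ∏ j, betaPDFReal (a j) (b j) (x j) := by
  have hcube : {x : ι → ℝ | ∀ j, 0 < x j ∧ x j < 1} = univ.pi fun _ => Ioo 0 1 := by
    ext x; simp [mem_pi]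
  rw [hcube, ← prod_indicator_apply_eq_indicator_univ_pi _ (fun j t =>
    Gamma (a j + b j) / (Gamma (a j) * Gamma (b j)) * (t ^ (a j - 1) * (1 - t) ^ (b j - 1)))]
  simp only [betaPDFReal_eq_indicator]

theorem lintegral_ofReal_prod_betaPDFReal {a b : ι → ℝ}
    (ha : ∀ j, 0 < a j) (hb : ∀ j, 0 < b j) :
    ∫⁻ x : ι → ℝ, ENNReal.ofReal (∏ j, betaPDFReal (a j) (b j) (x j)) = 1 := by
  rw [← ofReal_integral_eq_lintegral_ofReal (μ := volume)
      (Integrable.fintype_prod fun j => integrable_betaPDFReal (ha j) (hb j))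
      (ae_of_all _ fun x => Finset.prod_nonneg fun j _ => betaPDFReal_nonneg (ha j) (hb j) _),
    integral_fintype_prod_volume_eq_prod,
    Finset.prod_eq_one fun j _ => integral_betaPDFReal (ha j) (hb j), ENNReal.ofReal_one]

theorem abs_prod_inv_mul_prod_betaPDFReal {a b u : ι → ℝ}
    (hu : ∀ j, 0 < u j) (v : ι → ℝ) :
    |∏ j, (u j)⁻¹| * (∏ j, betaPDFReal (a j) (b j) ((u j)⁻¹ * v j)) * |∏ j, (u j)⁻¹ * v j|
      = (univ.pi fun j => Ioo 0 (u j)).indicator (fun v => ∏ j,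
          u j ^ (-a j - b j) / beta (a j) (b j) * ((u j - v j) ^ (b j - 1) * v j ^ a j)) v := by
  rw [← prod_indicator_apply_eq_indicator_univ_pi _
    (fun j t => u j ^ (-a j - b j) / beta (a j) (b j) * ((u j - t) ^ (b j - 1) * t ^ a j)),
    Finset.abs_prod, Finset.abs_prod, ← Finset.prod_mul_distrib, ← Finset.prod_mul_distrib]
  refine Finset.prod_congr rfl fun j _ => ?_
  rw [abs_of_pos (inv_pos.2 (hu j))]
  exact inv_mul_betaPDFReal_inv_mul (hu j) (v j)

theorem quotientDensity_prod_betaPDFReal {a b : ι → ℝ} (ha : ∀ j, 0 < a j) (hb : ∀ j, 0 < b j)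
    {f : (ι → ℝ) → ℝ} (hf : ∀ v, 0 ≤ f v) {u : ι → ℝ} (hu : ∀ j, 0 < u j) :
    quotientDensity (fun x => ENNReal.ofReal (∏ j, betaPDFReal (a j) (b j) (x j)))
        (fun v => ENNReal.ofReal (f v)) u
      = ∫⁻ v, ENNReal.ofReal ((univ.pi fun j => Ioo 0 (u j)).indicator (fun v =>
          (∏ j, u j ^ (-a j - b j) / beta (a j) (b j)) *
            ((∏ j, (u j - v j) ^ (b j - 1) * v j ^ a j) * f v)) v) := by
  rw [quotientDensity, lintegral_eq_abs_prod_mul_lintegral_comp_mul_left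
    (c := u⁻¹) (fun j => inv_ne_zero (hu j).ne'), ← lintegral_const_mul' _ _ ENNReal.ofReal_ne_top]
  refine lintegral_congr fun v => ?_
  have hv : u⁻¹ * v * u = v := funext fun j => by simp [mul_right_comm _ (v j), (hu j).ne']
  have hβ : 0 ≤ ∏ j, betaPDFReal (a j) (b j) ((u⁻¹ * v) j) :=
    Finset.prod_nonneg fun j _ => betaPDFReal_nonneg (ha j) (hb j) _
  rw [hv, ← ENNReal.ofReal_mul hβ, ← ENNReal.ofReal_mul (mul_nonneg hβ (hf v)),
    ← ENNReal.ofReal_mul (abs_nonneg _)]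
  congr 1
  simp only [Pi.inv_apply, Pi.mul_apply]
  calc |∏ j, (u j)⁻¹| * ((∏ j, betaPDFReal (a j) (b j) ((u j)⁻¹ * v j)) * f v *
        |∏ j, (u j)⁻¹ * v j|)
      = |∏ j, (u j)⁻¹| * (∏ j, betaPDFReal (a j) (b j) ((u j)⁻¹ * v j)) *
        |∏ j, (u j)⁻¹ * v j| * f v := by ring
    _ = _ := by
      rw [abs_prod_inv_mul_prod_betaPDFReal hu]
      by_cases hvS : v ∈ univ.pi fun j => Ioo 0 (u j)
      · rw [indicator_of_mem hvS, indicator_of_mem hvS, Finset.prod_mul_distrib, mul_assoc]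
      · rw [indicator_of_notMem hvS, indicator_of_notMem hvS, zero_mul]

end ProductBeta

theorem prod_Gamma_div_mul_toReal_quotientDensity_eq_kober1 {k : ℕ} {ζ α : Fin k → ℝ}
    (hζ : ∀ j, 0 < ζ j) (hα : ∀ j, 0 < α j) {f : (Fin k → ℝ) → ℝ} (hf_meas : Measurable f)
    (hf_nonneg : ∀ x, 0 ≤ f x) {u : Fin k → ℝ} (hu : ∀ j, 0 < u j) :
    (∏ j, Gamma (ζ j) / Gamma (ζ j + α j)) *
      (quotientDensity (fun x => ENNReal.ofReal (∏ j, betaPDFReal (ζ j) (α j) (x j)))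
        (fun v => ENNReal.ofReal (f v)) u).toReal
      = kober1 ζ α f u := by
  set S := univ.pi fun j => Ioo 0 (u j)
  set c : ℝ := ∏ j, u j ^ (-ζ j - α j) / beta (ζ j) (α j)
  have hS : {v : Fin k → ℝ | ∀ j, 0 < v j ∧ v j < u j} = S := by ext v; simp [S, mem_pi]
  have hSm : MeasurableSet S := MeasurableSet.univ_pi fun j => measurableSet_Ioo
  have hc : 0 ≤ c := Finset.prod_nonneg fun j _ =>
    div_nonneg (rpow_nonneg (hu j).le _) (beta_pos (hζ j) (hα j)).le
  have hnonneg : ∀ v, 0 ≤ S.indicator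
      (fun v => c * ((∏ j, (u j - v j) ^ (α j - 1) * v j ^ ζ j) * f v)) v := by
    refine fun v => indicator_nonneg (fun v hv => mul_nonneg hc (mul_nonneg ?_ (hf_nonneg v))) v
    exact Finset.prod_nonneg fun j _ => mul_nonneg (rpow_nonneg (sub_pos.2 (hv j trivial).2).le _)
      (rpow_nonneg (hv j trivial).1.le _)
  have hcoef : (∏ j, Gamma (ζ j) / Gamma (ζ j + α j)) * c
      = ∏ j, u j ^ (-ζ j - α j) / Gamma (α j) := by
    rw [← Finset.prod_mul_distrib]
    refine Finset.prod_congr rfl fun j _ => ?_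
    have := (Gamma_pos_of_pos (hζ j)).ne'
    have := (Gamma_pos_of_pos (add_pos (hζ j) (hα j))).ne'
    rw [beta]
    field_simp
  rw [quotientDensity_prod_betaPDFReal hζ hα hf_nonneg hu,
    ← integral_eq_lintegral_of_nonneg_ae (ae_of_all _ hnonneg)
      ((Measurable.indicator (by fun_prop) hSm).aestronglyMeasurable),
    integral_indicator hSm, integral_const_mul, ← mul_assoc, hcoef, kober1, hS]

theorem kober1_as_density_beta_general {k : ℕ} (ζ α : Fin k → ℝ)
    (hζ : ∀ j, 0 < ζ j) (hα : ∀ j, 0 < α j)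
    (f : (Fin k → ℝ) → ℝ) (hf_meas : Measurable f) (hf_nonneg : ∀ x, 0 ≤ f x)
    (hf_int : ∫⁻ x, ENNReal.ofReal (f x) = 1) :
    ∃ g : (Fin k → ℝ) → ℝ, Measurable g ∧
      Measure.map (fun p : (Fin k → ℝ) × (Fin k → ℝ) => fun j => p.2 j / p.1 j)
          ((volume.withDensity (fun x => ENNReal.ofReal
              (Set.indicator {x : Fin k → ℝ | ∀ j, 0 < x j ∧ x j < 1}
                (fun x => ∏ j, Real.Gamma (ζ j + α j) /
                  (Real.Gamma (ζ j) * Real.Gamma (α j)) *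
                    (x j ^ (ζ j - 1) * (1 - x j) ^ (α j - 1))) x))).prod
            (volume.withDensity fun v => ENNReal.ofReal (f v)))
        = volume.withDensity (fun u => ENNReal.ofReal (g u)) ∧
      ∀ᵐ u : Fin k → ℝ, (∀ j, 0 < u j) →
        (∏ j, Real.Gamma (ζ j) / Real.Gamma (ζ j + α j)) * g u
          = kober1 ζ α f u := by
  set φ : (Fin k → ℝ) → ℝ≥0∞ := fun x => ENNReal.ofReal (∏ j, betaPDFReal (ζ j) (α j) (x j))
  have hφ : Measurable φ := by fun_prop
  have hf : Measurable fun v => ENNReal.ofReal (f v) := hf_meas.ennreal_ofReal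
  set G := quotientDensity φ fun v => ENNReal.ofReal (f v)
  have hG : Measurable G := measurable_quotientDensity hφ hf
  have hG_ne_top : ∀ᵐ u, G u ≠ ∞ := by
    refine (ae_lt_top hG ?_).mono fun u hu => hu.ne
    rw [lintegral_quotientDensity hφ hf, lintegral_ofReal_prod_betaPDFReal hζ hα, hf_int, one_mul]
    exact ENNReal.one_ne_top
  refine ⟨fun u => (G u).toReal, hG.ennreal_toReal, ?_, ae_of_all _ fun u hu =>
    prod_Gamma_div_mul_toReal_quotientDensity_eq_kober1 hζ hα hf_meas hf_nonneg hu⟩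
  simp_rw [indicator_eq_prod_betaPDFReal]
  exact (map_div_prod_withDensity hφ hf).trans
    (withDensity_congr_ae (hG_ne_top.mono fun u hu => (ENNReal.ofReal_toReal hu).symm))

/-- Theorem 2.1: if `x_1,…,x_k` are independent type-1 beta variables with parameters
`(ζ_j, α_j)` and `(v_1,…,v_k)` has an arbitrary joint density `f` on the positive
orthant, independent of the `x_j`, then the joint density `g` of `u_j = v_j/x_j`
satisfies `(∏ Γ(ζ_j)/Γ(ζ_j+α_j)) g(u) = (I^{(ζ,α)} f)(u)` a.e. on the positive
orthant. -/
theorem kober1_as_density_beta {k : ℕ} (hk : 1 ≤ k) (ζ α : Fin k → ℝ)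
    (hζ : ∀ j, 0 < ζ j) (hα : ∀ j, 0 < α j)
    (f : (Fin k → ℝ) → ℝ) (hf_meas : Measurable f) (hf_nonneg : ∀ x, 0 ≤ f x)
    (hf_supp : ∀ x, ¬ (∀ j, 0 < x j) → f x = 0)
    (hf_int : ∫⁻ x, ENNReal.ofReal (f x) = 1) :
    ∃ g : (Fin k → ℝ) → ℝ, Measurable g ∧
      Measure.map (fun p : (Fin k → ℝ) × (Fin k → ℝ) => fun j => p.2 j / p.1 j)
          ((volume.withDensity (fun x => ENNReal.ofReal
              (Set.indicator {x : Fin k → ℝ | ∀ j, 0 < x j ∧ x j < 1}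
                (fun x => ∏ j, Real.Gamma (ζ j + α j) /
                  (Real.Gamma (ζ j) * Real.Gamma (α j)) *
                    (x j ^ (ζ j - 1) * (1 - x j) ^ (α j - 1))) x))).prod
            (volume.withDensity fun v => ENNReal.ofReal (f v)))
        = volume.withDensity (fun u => ENNReal.ofReal (g u)) ∧
      ∀ᵐ u : Fin k → ℝ, (∀ j, 0 < u j) →
        (∏ j, Real.Gamma (ζ j) / Real.Gamma (ζ j + α j)) * g u
          = kober1 ζ α f u :=
  kober1_as_density_beta_general ζ α hζ hα f hf_meas hf_nonneg hf_int
end
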